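/- For the quantum circuit analysis of the modified SIMON linear approximation: in Case (q₁,q₃)=(0,0) the probability that r₀ = 0 equals cos²(θ/2); the same holds for Case (0,1); in Cases (1,0) and (1,1) the probability equals (1+sin θ)/2. At θ = π/4 all four probabilities equal (2+√2)/4. -/

import Mathlib

/-! A product gate `A ⊗ B` sends the Bell state to the state with amplitudes `(A Bᵀ)ᵢⱼ / √2`,
and the final CNOT moves the `r₀ = 0` outcomes onto the diagonal, so every case probability is
half the sum of the squared diagonal entries of `X^{q₁q₃} H^{q₁} R(∓θ)ᵀ`. For `q₁ = 0` these
entries are `cos(θ/2)`; for `q₁ = 1` they are `±(cos(θ/2) + sin(θ/2))/√2`, and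
`(cos(θ/2) + sin(θ/2))² = 1 + sin θ`. -/

open Matrix Kronecker Real

noncomputable def rotGate (θ : ℝ) : Matrix (Fin 2) (Fin 2) ℝ :=
  !![Real.cos (θ/2), -Real.sin (θ/2); Real.sin (θ/2), Real.cos (θ/2)]

noncomputable def hadamard : Matrix (Fin 2) (Fin 2) ℝ :=
  (Real.sqrt 2)⁻¹ • !![1, 1; 1, -1]

def xGate : Matrix (Fin 2) (Fin 2) ℝ := !![0, 1; 1, 0]

/-- The Bell state `(|00⟩ + |11⟩)/√2` on the registers `(r₀, k₀)`. -/
noncomputable def bellState : Fin 2 × Fin 2 → ℝ :=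
  fun p => if p.1 = p.2 then (Real.sqrt 2)⁻¹ else 0

/-- CNOT with control `k₀` (second register) and target `r₀` (first register). -/
def cnot21 (φ : Fin 2 × Fin 2 → ℝ) : Fin 2 × Fin 2 → ℝ :=
  fun p => φ (p.1 + p.2, p.2)

/-- The final state of the modified SIMON circuit with classical control bits `q₁, q₃`:
apply `H` to `r₀` if `q₁ = 1`; apply `R(−θ)` to `k₀` if `q₃ = 0` and `R(θ)` if `q₃ = 1`;
apply `X` to `r₀` if `q₁ = q₃ = 1`; finally apply CNOT (control `k₀`, target `r₀`). -/
noncomputable def finalState (q₁ q₃ : Bool) (θ : ℝ) : Fin 2 × Fin 2 → ℝ :=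
  cnot21
    ((((if q₁ && q₃ then xGate else 1) ⊗ₖ (1 : Matrix (Fin 2) (Fin 2) ℝ)).mulVec
      (((if q₁ then hadamard else 1) ⊗ₖ rotGate (if q₃ then θ else -θ)).mulVec bellState)))

/-- Probability of measuring `r₀ = 0`. -/
noncomputable def probFirstZero (φ : Fin 2 × Fin 2 → ℝ) : ℝ :=
  (φ (0, 0)) ^ 2 + (φ (0, 1)) ^ 2

lemma kronecker_mulVec_bellState (A B : Matrix (Fin 2) (Fin 2) ℝ) (i j : Fin 2) :
    ((A ⊗ₖ B) *ᵥ bellState) (i, j) = (√2)⁻¹ * (A * Bᵀ) i j := by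
  simp only [mulVec, dotProduct, kroneckerMap_apply, bellState, mul_ite, mul_zero,
    Fintype.sum_prod_type, Finset.sum_ite_eq, Finset.mem_univ, if_true, Fin.sum_univ_two, mul_apply,
    transpose_apply]
  ring

lemma probFirstZero_cnot21 (φ : Fin 2 × Fin 2 → ℝ) :
    probFirstZero (cnot21 φ) = φ (0, 0) ^ 2 + φ (1, 1) ^ 2 := by
  simp [probFirstZero, cnot21]

lemma probFirstZero_cnot21_kronecker_mulVec_bellState (A B : Matrix (Fin 2) (Fin 2) ℝ) :
    probFirstZero (cnot21 ((A ⊗ₖ B) *ᵥ bellState)) = ((A * Bᵀ) 0 0 ^ 2 + (A * Bᵀ) 1 1 ^ 2) / 2 := by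
  simp only [probFirstZero_cnot21, kronecker_mulVec_bellState, mul_pow, inv_pow,
    Real.sq_sqrt zero_le_two]
  ring

lemma rotGate_transpose (θ : ℝ) : (rotGate θ)ᵀ = rotGate (-θ) := by
  ext i j; fin_cases i <;> fin_cases j <;> simp [rotGate, neg_div]

lemma cos_half_add_sin_half_sq (θ : ℝ) : (cos (θ / 2) + sin (θ / 2)) ^ 2 = 1 + sin θ := by
  nth_rw 3 [← add_halves θ]
  rw [add_sq, sin_add, ← cos_sq_add_sin_sq (θ / 2)]
  ring

noncomputable def circuitMatrix (q₁ q₃ : Bool) (θ : ℝ) : Matrix (Fin 2) (Fin 2) ℝ :=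
  (if q₁ && q₃ then xGate else 1) * (if q₁ then hadamard else 1) * rotGate (if q₃ then -θ else θ)

lemma probFirstZero_finalState (q₁ q₃ : Bool) (θ : ℝ) :
    probFirstZero (finalState q₁ q₃ θ) =
      (circuitMatrix q₁ q₃ θ 0 0 ^ 2 + circuitMatrix q₁ q₃ θ 1 1 ^ 2) / 2 := by
  rw [finalState, mulVec_mulVec, ← mul_kronecker_mul, one_mul,
    probFirstZero_cnot21_kronecker_mulVec_bellState, rotGate_transpose, circuitMatrix]
  cases q₃ <;> simp

lemma probFirstZero_finalState_false (q₃ : Bool) (θ : ℝ) :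
    probFirstZero (finalState false q₃ θ) = cos (θ / 2) ^ 2 := by
  rw [probFirstZero_finalState, circuitMatrix]
  cases q₃ <;> simp [rotGate, neg_div]

lemma probFirstZero_finalState_true (q₃ : Bool) (θ : ℝ) :
    probFirstZero (finalState true q₃ θ) = (1 + sin θ) / 2 := by
  have h : ((√2)⁻¹ : ℝ) ^ 2 = 1 / 2 := by rw [inv_pow, Real.sq_sqrt zero_le_two, one_div]
  rw [probFirstZero_finalState, circuitMatrix, ← cos_half_add_sin_half_sq]
  cases q₃ <;> simp [rotGate, _root_.hadamard, xGate, mul_apply, Fin.sum_univ_two, neg_div] <;>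
    linear_combination 2 * (cos (θ / 2) + sin (θ / 2)) ^ 2 * h

/-- The four case probabilities of the modified SIMON linear-approximation circuit:
`cos²(θ/2)` when `q₁ = 0` (both values of `q₃`), and `(1 + sin θ)/2` when `q₁ = 1`
(both values of `q₃`); at `θ = π/4` all four equal `(2 + √2)/4`. -/
theorem modified_simon_case_probabilities (θ : ℝ) :
    probFirstZero (finalState false false θ) = Real.cos (θ/2) ^ 2 ∧
    probFirstZero (finalState false true θ) = Real.cos (θ/2) ^ 2 ∧
    probFirstZero (finalState true false θ) = (1 + Real.sin θ) / 2 ∧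
    probFirstZero (finalState true true θ) = (1 + Real.sin θ) / 2 ∧
    (Real.cos (Real.pi/4/2) ^ 2 = (2 + Real.sqrt 2) / 4 ∧
      (1 + Real.sin (Real.pi/4)) / 2 = (2 + Real.sqrt 2) / 4) := by
  refine ⟨probFirstZero_finalState_false false θ, probFirstZero_finalState_false true θ,
    probFirstZero_finalState_true false θ, probFirstZero_finalState_true true θ, ?_, ?_⟩
  · rw [div_div, show (4 : ℝ) * 2 = 8 by norm_num, cos_pi_div_eight, div_pow,
      Real.sq_sqrt (by positivity)]
    norm_num
  · rw [sin_pi_div_four]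
    ring
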